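/- Suppose α = (a_k, b_k, c_k)_{k=1,…,5} ∈ 𝒜̄_X maximizes the volume functional 𝒱 over 𝒜̄_X. If for some k ∈ {1,…,5} one of the numbers a_k, b_k, c_k equals 0, then among a_k, b_k, c_k two are equal to 0 and the remaining one is equal to 1/2 (i.e., the k-th tetrahedron is taut). -/

import Mathlib

open Real

/-- The Lobachevsky function `Λ(x) = -∫₀ˣ log |2 sin t| dt`. -/
noncomputable def Lob (x : ℝ) : ℝ := -∫ t in (0:ℝ)..x, Real.log |2 * Real.sin t|

/-- The five balancing equations of the ideal triangulation `X` of `S³∖7₃`. -/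
def BalancedX (a b c : Fin 5 → ℝ) : Prop :=
  b 0 + b 1 + a 2 + b 3 + c 3 + a 4 + b 4 = 1 ∧
  b 0 + c 0 + c 1 + b 2 + c 2 + a 3 + c 4 = 1 ∧
  a 1 + b 2 + a 3 + b 3 + a 4 + c 4 = 1 ∧
  a 0 + c 0 + a 1 + c 1 + a 2 = 1 ∧
  a 0 + b 1 + c 2 + c 3 + b 4 = 1

/-- Membership in `𝒜̄_X`, the closure of the space of angle structures. -/
def InAbar (a b c : Fin 5 → ℝ) : Prop :=
  (∀ k, a k ∈ Set.Icc (0:ℝ) (1/2) ∧ b k ∈ Set.Icc (0:ℝ) (1/2) ∧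
    c k ∈ Set.Icc (0:ℝ) (1/2)) ∧
  (∀ k, a k + b k + c k = 1/2) ∧ BalancedX a b c

/-- The volume functional `𝒱`. -/
noncomputable def VolF (a b c : Fin 5 → ℝ) : ℝ :=
  ∑ k, (Lob (2 * π * a k) + Lob (2 * π * b k) + Lob (2 * π * c k))

/-!
Move from the maximizer `α` towards a strictly positive angle structure `β` along
`α + t (β - α)`, `t ↓ 0`. Near `0`, `Λ(x) = -x log x + O(x)`, and `Λ` is differentiable on
`(0, π)`. So an angle inside `(0, π)` changes `Λ` by `O(t)`, an angle leaving `0` gains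
`Λ(2π a' t) ≈ 2π a' t (-log t) ≥ 0`, and a taut tetrahedron, whose angles move as
`π - (V + W), V, W`, changes the volume by `Λ(V) + Λ(W) - Λ(V + W) ≥ -(V + W)`. Hence every
tetrahedron loses at most `O(t)`, while a flat tetrahedron that is not taut gains the
`t (-log t)` term of its zero angle, which dominates: the volume increases.
-/

open Filter Topology

lemma intervalIntegrable_log_abs_two_mul_sin (a b : ℝ) :
    IntervalIntegrable (fun t => log |2 * sin t|) MeasureTheory.volume a b :=
  (analyticOnNhd_const.mul analyticOnNhd_sin).meromorphicOn.intervalIntegrable_log_norm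

lemma lob_zero : Lob 0 = 0 := by simp [Lob]

lemma lob_sub_lob (u v : ℝ) : Lob v - Lob u = -∫ t in u..v, log |2 * sin t| := by
  rw [Lob, Lob, neg_sub_neg, intervalIntegral.integral_interval_sub_left
    (intervalIntegrable_log_abs_two_mul_sin _ _) (intervalIntegrable_log_abs_two_mul_sin _ _),
    intervalIntegral.integral_symm]

lemma lob_pi_sub (w : ℝ) : Lob (π - w) = Lob π - Lob w := by
  have h := intervalIntegral.integral_comp_sub_left (fun t => log |2 * sin t|) (a := 0) (b := w) π
  simp only [sin_pi_sub, sub_zero] at h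
  rw [eq_sub_iff_add_eq, ← eq_sub_iff_add_eq', lob_sub_lob, ← h, Lob]

lemma hasDerivAt_lob {x : ℝ} (hx : sin x ≠ 0) : HasDerivAt Lob (-log |2 * sin x|) x := by
  have hcont : Continuous fun t => |2 * sin t| := by fun_prop
  refine (intervalIntegral.integral_hasDerivAt_right (intervalIntegrable_log_abs_two_mul_sin _ _)
    ?_ ?_).neg
  · exact (measurable_log.comp hcont.measurable).stronglyMeasurable.stronglyMeasurableAtFilter
  · exact hcont.continuousAt.log (by simpa using hx)

lemma log_le_log_abs_two_mul_sin {t : ℝ} (h0 : 0 ≤ t) (h : t ≤ π / 2) :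
    log t ≤ log |2 * sin t| := by
  rcases h0.eq_or_lt with rfl | ht
  · simp
  have hjordan := mul_le_sin h0 h
  have hlin : t ≤ 2 * (2 / π * t) := by
    rw [← mul_assoc]
    refine le_mul_of_one_le_left h0 ?_
    rw [← mul_div_assoc, le_div_iff₀ pi_pos]
    linarith [pi_le_four]
  exact log_le_log ht (by rw [abs_of_nonneg (by linarith)]; linarith)

lemma log_abs_two_mul_sin_le {t : ℝ} (h0 : 0 ≤ t) (h : t ≤ π / 2) :
    log |2 * sin t| ≤ log 2 + log t := by
  rcases h0.eq_or_lt with rfl | ht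
  · simpa using log_nonneg one_le_two
  have hsin := sin_pos_of_pos_of_lt_pi ht (by linarith [pi_pos])
  rw [← log_mul two_ne_zero ht.ne', abs_of_pos (by linarith)]
  exact log_le_log (by linarith) (by linarith [sin_le h0])

lemma neg_mul_log_le_lob {x : ℝ} (h0 : 0 ≤ x) (h : x ≤ π / 2) : -(x * log x) ≤ Lob x := by
  have hint : ∫ t in (0:ℝ)..x, log |2 * sin t| ≤ ∫ t in (0:ℝ)..x, (log 2 + log t) :=
    intervalIntegral.integral_mono_on h0 (intervalIntegrable_log_abs_two_mul_sin _ _)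
      (intervalIntegrable_const.add intervalIntegral.intervalIntegrable_log')
      fun t ht => log_abs_two_mul_sin_le ht.1 (ht.2.trans h)
  rw [intervalIntegral.integral_add intervalIntegrable_const
    intervalIntegral.intervalIntegrable_log', integral_log] at hint
  have hlog2 : log 2 ≤ 1 := by linarith [log_le_sub_one_of_pos two_pos]
  simp only [intervalIntegral.integral_const, smul_eq_mul] at hint
  rw [Lob]
  nlinarith

lemma lob_le_sub_mul_log {x : ℝ} (h0 : 0 ≤ x) (h : x ≤ π / 2) : Lob x ≤ x - x * log x := by
  have hint : ∫ t in (0:ℝ)..x, log t ≤ ∫ t in (0:ℝ)..x, log |2 * sin t| :=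
    intervalIntegral.integral_mono_on h0 intervalIntegral.intervalIntegrable_log'
      (intervalIntegrable_log_abs_two_mul_sin _ _)
      fun t ht => log_le_log_abs_two_mul_sin ht.1 (ht.2.trans h)
  rw [integral_log] at hint
  rw [Lob]
  linarith

lemma lob_add_le {V W : ℝ} (hV : 0 ≤ V) (hW : 0 ≤ W) (h : V + W ≤ π / 2) :
    Lob (V + W) ≤ Lob V + Lob W + (V + W) := by
  have hVW : V * log V + W * log W ≤ (V + W) * log (V + W) := by
    have key : ∀ {u : ℝ}, 0 ≤ u → u ≤ V + W → u * log u ≤ u * log (V + W) := fun hu huVW => by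
      rcases hu.eq_or_lt with rfl | hu
      · simp
      · exact mul_le_mul_of_nonneg_left (log_le_log hu huVW) hu.le
    linarith [key hV (le_add_of_nonneg_right hW), key hW (le_add_of_nonneg_left hV)]
  linarith [lob_le_sub_mul_log (add_nonneg hV hW) h, neg_mul_log_le_lob hV (by linarith),
    neg_mul_log_le_lob hW (by linarith)]

def LinearlyBoundedBelow (f : ℝ → ℝ) : Prop :=
  ∃ C : ℝ, ∀ᶠ t in 𝓝[>] (0:ℝ), -(C * t) ≤ f t

namespace LinearlyBoundedBelow

lemma zero : LinearlyBoundedBelow 0 :=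
  ⟨0, Eventually.of_forall fun t => by simp⟩

lemma mono {f g : ℝ → ℝ} (hf : LinearlyBoundedBelow f) (hfg : ∀ᶠ t in 𝓝[>] (0:ℝ), f t ≤ g t) :
    LinearlyBoundedBelow g := by
  obtain ⟨C, hC⟩ := hf
  exact ⟨C, (hC.and hfg).mono fun t ht => ht.1.trans ht.2⟩

lemma add {f g : ℝ → ℝ} (hf : LinearlyBoundedBelow f) (hg : LinearlyBoundedBelow g) :
    LinearlyBoundedBelow (f + g) := by
  obtain ⟨C, hC⟩ := hf
  obtain ⟨D, hD⟩ := hg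
  exact ⟨C + D, (hC.and hD).mono fun t ht => by simp only [Pi.add_apply]; linarith [ht.1, ht.2]⟩

lemma sum {ι : Type*} (s : Finset ι) {f : ι → ℝ → ℝ}
    (hf : ∀ j ∈ s, LinearlyBoundedBelow (f j)) : LinearlyBoundedBelow (∑ j ∈ s, f j) := by
  classical
  induction s using Finset.induction_on with
  | empty => simpa using zero
  | insert j s hj ih =>
    rw [Finset.sum_insert hj]
    exact (hf j (s.mem_insert_self j)).add (ih fun i hi => hf i (Finset.mem_insert_of_mem hi))

lemma of_isBigO {f : ℝ → ℝ} (hf : f =O[𝓝 0] id) : LinearlyBoundedBelow f := by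
  obtain ⟨C, hC⟩ := hf.bound
  refine ⟨C, ((hC.filter_mono nhdsWithin_le_nhds).and self_mem_nhdsWithin).mono ?_⟩
  rintro t ⟨hbound, ht⟩
  rw [id, Real.norm_of_nonneg (le_of_lt ht), Real.norm_eq_abs] at hbound
  exact (abs_le.1 hbound).1

lemma eventually_pos {f : ℝ → ℝ} {δ : ℝ} (hδ : 0 < δ)
    (hf : LinearlyBoundedBelow fun t => f t - δ * (t * -log t)) :
    ∀ᶠ t in 𝓝[>] (0:ℝ), 0 < f t := by
  obtain ⟨C, hC⟩ := hf
  have hlog : ∀ᶠ t in 𝓝[>] (0:ℝ), log t < -(C / δ) :=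
    tendsto_log_nhdsGT_zero.eventually (eventually_lt_atBot _)
  filter_upwards [hC, hlog, self_mem_nhdsWithin] with t hCt hlogt ht
  have hdom : C < δ * -log t := (div_lt_iff₀' hδ).1 (by linarith)
  have : 0 < t * (δ * -log t - C) := mul_pos ht (sub_pos.2 hdom)
  linarith

end LinearlyBoundedBelow

lemma eventually_mul_le (c : ℝ) {ε : ℝ} (hε : 0 < ε) : ∀ᶠ t in 𝓝[>] (0:ℝ), c * t ≤ ε := by
  have : Tendsto (fun t => c * t) (𝓝 0) (𝓝 0) := by
    simpa using (continuous_const_mul c).tendsto 0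
  exact (this.eventually (eventually_le_nhds hε)).filter_mono nhdsWithin_le_nhds

noncomputable def lobDelta (x x' t : ℝ) : ℝ := Lob (2 * π * (x + t * (x' - x))) - Lob (2 * π * x)

lemma isBigO_lobDelta {x : ℝ} (hx : sin (2 * π * x) ≠ 0) (x' : ℝ) :
    lobDelta x x' =O[𝓝 0] id := by
  have hpath := (((hasDerivAt_id (0:ℝ)).mul_const (x' - x)).const_add x).const_mul (2 * π)
  have hlob : HasDerivAt Lob _ (2 * π * (x + id 0 * (x' - x))) :=
    hasDerivAt_lob (by simpa using hx)
  refine ((hlob.comp (0:ℝ) hpath).isBigO_sub).congr (fun t => ?_) (fun t => ?_)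
  · simp [lobDelta]
  · simp

lemma linearlyBoundedBelow_lobDelta_of_mem_Ioo {x : ℝ} (hx : x ∈ Set.Ioo 0 (1/2)) (x' : ℝ) :
    LinearlyBoundedBelow (lobDelta x x') :=
  .of_isBigO (isBigO_lobDelta (sin_pos_of_pos_of_lt_pi (mul_pos two_pi_pos hx.1)
    (by nlinarith [pi_pos, hx.2])).ne' x')

lemma lobDelta_zero_left (x' t : ℝ) : lobDelta 0 x' t = Lob (2 * π * x' * t) := by
  simp [lobDelta, lob_zero, mul_comm, mul_left_comm, mul_assoc]

lemma linearlyBoundedBelow_lobDelta_zero_sub {x' : ℝ} (hx' : 0 < x') :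
    LinearlyBoundedBelow fun t => lobDelta 0 x' t - 2 * π * x' * (t * -log t) := by
  refine ⟨2 * π * x' * log (2 * π * x'), ?_⟩
  filter_upwards [eventually_mul_le (2 * π * x') (half_pos pi_pos), self_mem_nhdsWithin]
    with t hsmall ht
  have hX : 0 < 2 * π * x' := by positivity
  have hlow := neg_mul_log_le_lob (mul_pos hX ht).le hsmall
  rw [log_mul hX.ne' (ne_of_gt ht)] at hlow
  rw [lobDelta_zero_left]
  linarith

lemma linearlyBoundedBelow_lobDelta {x x' : ℝ} (hx : x ∈ Set.Ico 0 (1/2)) (hx' : 0 < x') :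
    LinearlyBoundedBelow (lobDelta x x') := by
  rcases hx.1.eq_or_lt with rfl | hx0
  · refine (linearlyBoundedBelow_lobDelta_zero_sub hx').mono ?_
    filter_upwards [Ioc_mem_nhdsGT one_pos] with t ht
    have : 0 ≤ t * -log t := mul_nonneg ht.1.le (neg_nonneg.2 (log_nonpos ht.1.le ht.2))
    have : 0 ≤ 2 * π * x' * (t * -log t) := by positivity
    linarith
  · exact linearlyBoundedBelow_lobDelta_of_mem_Ioo ⟨hx0, hx.2⟩ x'

lemma linearlyBoundedBelow_lobDelta_taut {y' z' : ℝ} (hy' : 0 ≤ y') (hz' : 0 ≤ z') :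
    LinearlyBoundedBelow fun t =>
      lobDelta (1/2) (1/2 - (y' + z')) t + lobDelta 0 y' t + lobDelta 0 z' t := by
  refine ⟨2 * π * (y' + z'), ?_⟩
  filter_upwards [eventually_mul_le (2 * π * (y' + z')) (half_pos pi_pos), self_mem_nhdsWithin]
    with t hsmall ht
  have hV : 0 ≤ 2 * π * y' * t := by have := ht.out; positivity
  have hW : 0 ≤ 2 * π * z' * t := by have := ht.out; positivity
  have hsum := lob_add_le hV hW (by linarith)
  have hflat : lobDelta (1/2) (1/2 - (y' + z')) t = -Lob (2 * π * y' * t + 2 * π * z' * t) := by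
    rw [lobDelta, show 2 * π * (1/2 + t * (1/2 - (y' + z') - 1/2)) =
      π - (2 * π * y' * t + 2 * π * z' * t) by ring, lob_pi_sub,
      show 2 * π * (1/2 : ℝ) = π by ring]
    ring
  rw [hflat, lobDelta_zero_left, lobDelta_zero_left]
  linarith

def IsTaut (x y z : ℝ) : Prop :=
  (x = 0 ∧ y = 0 ∧ z = 1/2) ∨ (x = 0 ∧ y = 1/2 ∧ z = 0) ∨ (x = 1/2 ∧ y = 0 ∧ z = 0)

lemma linearlyBoundedBelow_tetrahedron {x y z x' y' z' : ℝ} (hx : x ∈ Set.Icc 0 (1/2))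
    (hy : y ∈ Set.Icc 0 (1/2)) (hz : z ∈ Set.Icc 0 (1/2)) (hs : x + y + z = 1/2)
    (hx' : 0 < x') (hy' : 0 < y') (hz' : 0 < z') (hs' : x' + y' + z' = 1/2) :
    LinearlyBoundedBelow fun t => lobDelta x x' t + lobDelta y y' t + lobDelta z z' t := by
  by_cases hx2 : x = 1/2
  · obtain rfl : y = 0 := by linarith [hy.1, hz.1]
    obtain rfl : z = 0 := by linarith [hy.1, hz.1]
    obtain rfl : x' = 1/2 - (y' + z') := by linarith
    subst hx2
    exact linearlyBoundedBelow_lobDelta_taut hy'.le hz'.le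
  by_cases hy2 : y = 1/2
  · obtain rfl : x = 0 := by linarith [hx.1, hz.1]
    obtain rfl : z = 0 := by linarith [hx.1, hz.1]
    obtain rfl : y' = 1/2 - (x' + z') := by linarith
    subst hy2
    exact (linearlyBoundedBelow_lobDelta_taut hx'.le hz'.le).mono
      (Eventually.of_forall fun t => by linarith)
  by_cases hz2 : z = 1/2
  · obtain rfl : x = 0 := by linarith [hx.1, hy.1]
    obtain rfl : y = 0 := by linarith [hx.1, hy.1]
    obtain rfl : z' = 1/2 - (x' + y') := by linarith
    subst hz2
    exact (linearlyBoundedBelow_lobDelta_taut hx'.le hy'.le).mono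
      (Eventually.of_forall fun t => by linarith)
  exact ((linearlyBoundedBelow_lobDelta ⟨hx.1, hx.2.lt_of_ne hx2⟩ hx').add
    (linearlyBoundedBelow_lobDelta ⟨hy.1, hy.2.lt_of_ne hy2⟩ hy')).add
    (linearlyBoundedBelow_lobDelta ⟨hz.1, hz.2.lt_of_ne hz2⟩ hz')

lemma linearlyBoundedBelow_flat {y z x' : ℝ} (hy : y ∈ Set.Ioo 0 (1/2)) (hz : z ∈ Set.Ioo 0 (1/2))
    (hx' : 0 < x') (y' z' : ℝ) :
    LinearlyBoundedBelow fun t =>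
      lobDelta 0 x' t + lobDelta y y' t + lobDelta z z' t - 2 * π * x' * (t * -log t) :=
  (((linearlyBoundedBelow_lobDelta_zero_sub hx').add
    (linearlyBoundedBelow_lobDelta_of_mem_Ioo hy y')).add
    (linearlyBoundedBelow_lobDelta_of_mem_Ioo hz z')).mono
    (Eventually.of_forall fun t => by simp only [Pi.add_apply]; linarith)

lemma exists_linearlyBoundedBelow_flat {x y z x' y' z' : ℝ} (hx : 0 ≤ x) (hy : 0 ≤ y)
    (hz : 0 ≤ z) (hs : x + y + z = 1/2) (hflat : x = 0 ∨ y = 0 ∨ z = 0) (hnt : ¬IsTaut x y z)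
    (hx' : 0 < x') (hy' : 0 < y') (hz' : 0 < z') :
    ∃ δ > 0, LinearlyBoundedBelow fun t =>
      lobDelta x x' t + lobDelta y y' t + lobDelta z z' t - δ * (t * -log t) := by
  rcases hflat with rfl | rfl | rfl
  · have hy0 : 0 < y := hy.lt_of_ne' fun h => hnt (Or.inl ⟨rfl, h, by linarith⟩)
    have hz0 : 0 < z := hz.lt_of_ne' fun h => hnt (Or.inr (Or.inl ⟨rfl, by linarith, h⟩))
    exact ⟨2 * π * x', by positivity,
      linearlyBoundedBelow_flat ⟨hy0, by linarith⟩ ⟨hz0, by linarith⟩ hx' y' z'⟩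
  · have hx0 : 0 < x := hx.lt_of_ne' fun h => hnt (Or.inl ⟨h, rfl, by linarith⟩)
    have hz0 : 0 < z := hz.lt_of_ne' fun h => hnt (Or.inr (Or.inr ⟨by linarith, rfl, h⟩))
    exact ⟨2 * π * y', by positivity,
      (linearlyBoundedBelow_flat ⟨hx0, by linarith⟩ ⟨hz0, by linarith⟩ hy' x' z').mono
        (Eventually.of_forall fun t => by linarith)⟩
  · have hx0 : 0 < x := hx.lt_of_ne' fun h => hnt (Or.inr (Or.inl ⟨h, by linarith, rfl⟩))
    have hy0 : 0 < y := hy.lt_of_ne' fun h => hnt (Or.inr (Or.inr ⟨by linarith, h, rfl⟩))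
    exact ⟨2 * π * z', by positivity,
      (linearlyBoundedBelow_flat ⟨hx0, by linarith⟩ ⟨hy0, by linarith⟩ hz' x' y').mono
        (Eventually.of_forall fun t => by linarith)⟩

lemma eventually_sum_pos {ι : Type*} [Fintype ι] {f : ι → ℝ → ℝ} {δ : ℝ} (k : ι) (hδ : 0 < δ)
    (hk : LinearlyBoundedBelow fun t => f k t - δ * (t * -log t))
    (hf : ∀ j, LinearlyBoundedBelow (f j)) :
    ∀ᶠ t in 𝓝[>] (0:ℝ), 0 < ∑ j, f j t := by
  classical
  refine LinearlyBoundedBelow.eventually_pos hδ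
    ((hk.add (.sum (Finset.univ.erase k) fun j _ => hf j)).mono (Eventually.of_forall fun t => ?_))
  rw [← Finset.add_sum_erase _ _ (Finset.mem_univ k)]
  simp only [Pi.add_apply, Finset.sum_apply]
  linarith

lemma exists_pos_inAbar : ∃ A B C : Fin 5 → ℝ, InAbar A B C ∧ ∀ j, 0 < A j ∧ 0 < B j ∧ 0 < C j := by
  refine ⟨![1/3, 1/4, 1/4, 1/6, 1/12], ![1/12, 1/6, 1/12, 1/12, 1/12],
    ![1/12, 1/12, 1/6, 1/4, 1/3], ⟨fun j => ?_, fun j => ?_, ?_⟩, fun j => ?_⟩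
  · fin_cases j <;> norm_num
  · fin_cases j <;> norm_num
  · simp only [BalancedX, Matrix.cons_val]
    norm_num
  · fin_cases j <;> norm_num

lemma InAbar.add_mul_sub {a b c a' b' c' : Fin 5 → ℝ} (h : InAbar a b c) (h' : InAbar a' b' c')
    {t : ℝ} (ht : t ∈ Set.Icc 0 1) :
    InAbar (fun j => a j + t * (a' j - a j)) (fun j => b j + t * (b' j - b j))
      (fun j => c j + t * (c' j - c j)) := by
  obtain ⟨hr, hs, e₁, e₂, e₃, e₄, e₅⟩ := h
  obtain ⟨hr', hs', e₁', e₂', e₃', e₄', e₅'⟩ := h'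
  have hIcc : Convex ℝ (Set.Icc (0:ℝ) (1/2)) := convex_Icc 0 (1/2)
  refine ⟨fun j => ⟨hIcc.add_smul_sub_mem (hr j).1 (hr' j).1 ht,
    hIcc.add_smul_sub_mem (hr j).2.1 (hr' j).2.1 ht,
    hIcc.add_smul_sub_mem (hr j).2.2 (hr' j).2.2 ht⟩,
    fun j => by linear_combination (1 - t) * hs j + t * hs' j, ?_, ?_, ?_, ?_, ?_⟩
  · linear_combination (1 - t) * e₁ + t * e₁'
  · linear_combination (1 - t) * e₂ + t * e₂'
  · linear_combination (1 - t) * e₃ + t * e₃'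
  · linear_combination (1 - t) * e₄ + t * e₄'
  · linear_combination (1 - t) * e₅ + t * e₅'

lemma volF_add_mul_sub_sub (a b c a' b' c' : Fin 5 → ℝ) (t : ℝ) :
    VolF (fun j => a j + t * (a' j - a j)) (fun j => b j + t * (b' j - b j))
      (fun j => c j + t * (c' j - c j)) - VolF a b c =
    ∑ j, (lobDelta (a j) (a' j) t + lobDelta (b j) (b' j) t + lobDelta (c j) (c' j) t) := by
  rw [VolF, VolF, ← Finset.sum_sub_distrib]
  refine Finset.sum_congr rfl fun j _ => ?_
  simp only [lobDelta]
  ring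

/-- a maximizer of the volume functional on `𝒜̄_X` having a flat
tetrahedron must have that tetrahedron taut. -/
theorem flat_implies_taut (a b c : Fin 5 → ℝ) (hmem : InAbar a b c)
    (hmax : ∀ a' b' c' : Fin 5 → ℝ, InAbar a' b' c' →
      VolF a' b' c' ≤ VolF a b c)
    (k : Fin 5) (h0 : a k = 0 ∨ b k = 0 ∨ c k = 0) :
    (a k = 0 ∧ b k = 0 ∧ c k = 1/2) ∨
    (a k = 0 ∧ b k = 1/2 ∧ c k = 0) ∨
    (a k = 1/2 ∧ b k = 0 ∧ c k = 0) := by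
  by_contra hnot
  obtain ⟨A, B, C, hβ, hpos⟩ := exists_pos_inAbar
  obtain ⟨hrange, hsum, -⟩ := id hmem
  have hgain : ∀ᶠ t in 𝓝[>] (0:ℝ), 0 < ∑ j,
      (lobDelta (a j) (A j) t + lobDelta (b j) (B j) t + lobDelta (c j) (C j) t) := by
    obtain ⟨δ, hδ, hk⟩ := exists_linearlyBoundedBelow_flat (hrange k).1.1 (hrange k).2.1.1
      (hrange k).2.2.1 (hsum k) h0 hnot (hpos k).1 (hpos k).2.1 (hpos k).2.2
    exact eventually_sum_pos k hδ hk fun j => linearlyBoundedBelow_tetrahedron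
      (hrange j).1 (hrange j).2.1 (hrange j).2.2 (hsum j) (hpos j).1 (hpos j).2.1 (hpos j).2.2
      (hβ.2.1 j)
  obtain ⟨t, hgain_t, ht⟩ := (hgain.and (Ioc_mem_nhdsGT one_pos)).exists
  have hle := hmax _ _ _ (hmem.add_mul_sub hβ ⟨ht.1.le, ht.2⟩)
  rw [← sub_nonpos, volF_add_mul_sub_sub] at hle
  exact hle.not_gt hgain_t
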